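/- arXiv:1805.07203 — 3 statements merged into one kernel-verified Lean document; each statement's English description precedes it below -/
import Mathlib

section
/- G satisfies the loop law if and only if for every real z > 0 and every natural number r ≥ 0, the diagonal of A(z)^r equals the diagonal of A(1)^r, i.e., (A(z)^r)_{uu} = (A(1)^r)_{uu} for every vertex u. -/
open Matrix BigOperators

variable {V : Type*} [Fintype V] [DecidableEq V]

/-- The signed weight `w*`: `w*(u,v) = w(u,v)` if `(u,v)` is an arc, and
`w*(u,v) = -w(v,u)` if `(v,u)` is an arc. -/
def wstar (E : V → V → Prop) [DecidableRel E] (w : V → V → ℝ) (u v : V) : ℝ :=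
  if E u v then w u v else -(w v u)

/-- The polynomial matrix `A(z)`, with `(A(z))_{uv} = z ^ w*(u,v)` (real power)
whenever `(u,v)` or `(v,u)` is an arc, and `0` otherwise. -/
noncomputable def polyMat (E : V → V → Prop) [DecidableRel E]
    (w : V → V → ℝ) (z : ℝ) : Matrix V V ℝ :=
  fun u v => if E u v ∨ E v u then z ^ (wstar E w u v) else 0

/-- Walks of length `r` from `u` to `v` in the underlying graph `UG`. -/
def walks (E : V → V → Prop) [DecidableRel E] (r : ℕ) (u v : V) :
    Finset (Fin (r + 1) → V) :=
  Finset.univ.filter fun p =>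
    p 0 = u ∧ p (Fin.last r) = v ∧
      ∀ i : Fin r, E (p i.castSucc) (p i.succ) ∨ E (p i.succ) (p i.castSucc)

/-- The weight `w*(p)` of a walk `p` of length `r`. -/
def walkWeight (E : V → V → Prop) [DecidableRel E] (w : V → V → ℝ) {r : ℕ}
    (p : Fin (r + 1) → V) : ℝ :=
  ∑ i : Fin r, wstar E w (p i.castSucc) (p i.succ)

lemma mem_walks (E : V → V → Prop) [DecidableRel E] {r : ℕ} {u v : V}
    {p : Fin (r+1) → V} :
    p ∈ walks E r u v ↔ p 0 = u ∧ p (Fin.last r) = v ∧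
      ∀ i : Fin r, E (p i.castSucc) (p i.succ) ∨ E (p i.succ) (p i.castSucc) := by
  simp [walks]

lemma weight_cons (E : V → V → Prop) [DecidableRel E] (w : V → V → ℝ)
    {r : ℕ} (u : V) (p : Fin (r+1) → V) :
    walkWeight E w (Fin.cons u p : Fin (r+2) → V) = wstar E w u (p 0) + walkWeight E w p := by
  unfold walkWeight
  rw [Fin.sum_univ_succ]
  have h0 : (Fin.cons u p : Fin (r+2) → V) (Fin.castSucc 0) = u := rfl
  have h1 : (Fin.cons u p : Fin (r+2) → V) (Fin.succ 0) = p 0 := rfl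
  rw [h0, h1]
  congr 1

lemma key (E : V → V → Prop) [DecidableRel E] (w : V → V → ℝ)
    (z : ℝ) (hz : 0 < z) (r : ℕ) (u v : V) :
    (polyMat E w z ^ r) u v = ∑ p ∈ walks E r u v, z ^ walkWeight E w p := by
  induction r generalizing u v with
  | zero =>
    by_cases h : u = v
    · subst h
      have : walks E 0 u u = {fun _ => u} := by
        ext p
        simp only [mem_walks, Finset.mem_singleton]
        constructor
        · rintro ⟨h1, -, -⟩
          funext i
          have hi : i = 0 := Fin.ext (by omega)
          rw [hi, h1]
        · rintro rfl
          exact ⟨rfl, rfl, fun i => i.elim0⟩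
      rw [this]
      simp [walkWeight, pow_zero, Matrix.one_apply]
    · have : walks E 0 u v = ∅ := by
        ext p
        simp only [mem_walks, Finset.notMem_empty, iff_false]
        rintro ⟨h1, h2, -⟩
        exact h (h1 ▸ h2 ▸ rfl)
      rw [this]
      simp [pow_zero, Matrix.one_apply, h]
  | succ r ih =>
    rw [pow_succ', Matrix.mul_apply]
    have step : ∀ x : V,
        polyMat E w z u x * (polyMat E w z ^ r) x v
          = ∑ q ∈ (walks E (r+1) u v).filter (fun q => q 1 = x),
              z ^ walkWeight E w q := by
      intro x
      by_cases h : E u x ∨ E x u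
      · rw [ih x v, Finset.mul_sum]
        refine Finset.sum_nbij' (fun p => (Fin.cons u p : Fin (r+2) → V))
          (fun q => Fin.tail q) ?_ ?_ ?_ ?_ ?_
        · intro p hp
          rw [mem_walks] at hp
          obtain ⟨hp0, hpl, hpe⟩ := hp
          rw [Finset.mem_filter, mem_walks]
          have hc1 : (Fin.cons u p : Fin (r+2) → V) 1 = x := by
            rw [show (1 : Fin (r+2)) = Fin.succ 0 from rfl]
            show p 0 = x
            exact hp0
          refine ⟨⟨rfl, ?_, ?_⟩, hc1⟩
          · show (Fin.cons u p : Fin (r+2) → V) (Fin.last (r+1)) = v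
            rw [← Fin.succ_last]
            show p (Fin.last r) = v
            exact hpl
          · intro i
            refine Fin.cases ?_ ?_ i
            · have e0 : (Fin.cons u p : Fin (r+2) → V) (Fin.castSucc 0) = u := rfl
              have e1 : (Fin.cons u p : Fin (r+2) → V) (Fin.succ 0) = x := hp0
              rw [e0, e1]; exact h
            · intro j
              have ha : (Fin.cons u p : Fin (r+2) → V) (Fin.castSucc j.succ)
                  = p (Fin.castSucc j) := by
                rw [← Fin.succ_castSucc]
                rfl
              have hb : (Fin.cons u p : Fin (r+2) → V) (Fin.succ j.succ) = p j.succ := rfl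
              rw [ha, hb]; exact hpe j
        · intro q hq
          rw [Finset.mem_filter, mem_walks] at hq
          obtain ⟨⟨hq0, hql, hqe⟩, hq1⟩ := hq
          rw [mem_walks]
          refine ⟨hq1, ?_, ?_⟩
          · show q (Fin.succ (Fin.last r)) = v
            rw [Fin.succ_last]; exact hql
          · intro i
            have h2 := hqe i.succ
            have ha : q (Fin.castSucc i.succ) = Fin.tail q (Fin.castSucc i) := by
              rw [← Fin.succ_castSucc]; rfl
            have hb : q (Fin.succ i.succ) = Fin.tail q i.succ := rfl
            rwa [ha, hb] at h2
        · intro p hp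
          funext i
          rfl
        · intro q hq
          rw [Finset.mem_filter, mem_walks] at hq
          rw [← hq.1.1]
          exact Fin.cons_self_tail q
        · intro p hp
          rw [mem_walks] at hp
          rw [weight_cons, hp.1, polyMat, if_pos h, Real.rpow_add hz]
      · have h0 : polyMat E w z u x = 0 := by rw [polyMat, if_neg h]
        rw [h0, zero_mul]
        symm
        apply Finset.sum_eq_zero
        intro q hq
        rw [Finset.mem_filter, mem_walks] at hq
        obtain ⟨⟨hq0, -, hqe⟩, hq1⟩ := hq
        exfalso
        have := hqe 0
        rw [show (Fin.castSucc (0 : Fin (r+1))) = 0 from rfl,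
          show (Fin.succ (0 : Fin (r+1))) = 1 from rfl, hq0, hq1] at this
        exact h this
    rw [Finset.sum_congr rfl fun x _ => step x]
    exact Finset.sum_fiberwise _ _ _

/-- The loop law: every closed walk in the underlying graph has weight `0`. -/
def LoopLaw (E : V → V → Prop) [DecidableRel E] (w : V → V → ℝ) : Prop :=
  ∀ (r : ℕ) (p : Fin (r + 1) → V),
    (∀ i : Fin r, E (p i.castSucc) (p i.succ) ∨ E (p i.succ) (p i.castSucc)) →
    p 0 = p (Fin.last r) → walkWeight E w p = 0

theorem loopLaw_iff_diag (E : V → V → Prop) [DecidableRel E]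
    (w : V → V → ℝ)
    (hloopless : ∀ u, ¬ E u u)
    (honedir : ∀ u v, E u v → ¬ E v u) :
    LoopLaw E w ↔
      ∀ (z : ℝ), 0 < z → ∀ (r : ℕ) (u : V),
        (polyMat E w z ^ r) u u = (polyMat E w 1 ^ r) u u := by
  unfold LoopLaw
  constructor
  · intro hL z hz r u
    rw [key E w z hz, key E w 1 one_pos]
    apply Finset.sum_congr rfl
    intro p hp
    rw [mem_walks] at hp
    have h0 : walkWeight E w p = 0 := hL r p hp.2.2 (hp.1.trans hp.2.1.symm)
    rw [h0, Real.rpow_zero, Real.rpow_zero]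
  · intro H r p hedge hclosed
    set u := p 0 with hu
    have hpmem : p ∈ walks E r u u := by
      rw [mem_walks]
      exact ⟨rfl, hclosed.symm, hedge⟩
    have h2 := H 2 (by norm_num) r u
    have hhalf := H (2⁻¹) (by norm_num) r u
    rw [key E w 2 (by norm_num), key E w 1 one_pos] at h2
    rw [key E w 2⁻¹ (by norm_num), key E w 1 one_pos] at hhalf
    simp only [Real.one_rpow] at h2 hhalf
    have hinv : ∀ q ∈ walks E r u u,
        (2:ℝ)⁻¹ ^ walkWeight E w q = ((2:ℝ) ^ walkWeight E w q)⁻¹ := by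
      intro q _
      rw [← Real.inv_rpow (by norm_num)]
    rw [Finset.sum_congr rfl hinv] at hhalf
    have hsum : ∑ q ∈ walks E r u u,
        ((2:ℝ) ^ walkWeight E w q + ((2:ℝ) ^ walkWeight E w q)⁻¹)
        = ∑ q ∈ walks E r u u, 2 := by
      rw [Finset.sum_add_distrib, h2, hhalf]
      simp [two_mul]
      ring
    have hle : ∀ q ∈ walks E r u u,
        (2:ℝ) ≤ (2:ℝ) ^ walkWeight E w q + ((2:ℝ) ^ walkWeight E w q)⁻¹ := by
      intro q _
      have hpos : (0:ℝ) < (2:ℝ) ^ walkWeight E w q := Real.rpow_pos_of_pos (by norm_num) _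
      have := mul_inv_cancel₀ (ne_of_gt hpos)
      nlinarith [sq_nonneg ((2:ℝ) ^ walkWeight E w q - 1)]
    have heach := (Finset.sum_eq_sum_iff_of_le hle).mp hsum.symm
    have hp2 := heach p hpmem
    have hpos : (0:ℝ) < (2:ℝ) ^ walkWeight E w p := Real.rpow_pos_of_pos (by norm_num) _
    have hone : (2:ℝ) ^ walkWeight E w p = 1 := by
      have := mul_inv_cancel₀ (ne_of_gt hpos)
      nlinarith [sq_nonneg ((2:ℝ) ^ walkWeight E w p - 1)]
    have hlog : walkWeight E w p * Real.log 2 = 0 := by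
      rw [← Real.log_rpow (by norm_num : (0:ℝ) < 2), hone, Real.log_one]
    rcases mul_eq_zero.mp hlog with h | h
    · exact h
    · exact absurd h (ne_of_gt (Real.log_pos (by norm_num)))
end

section
/- G satisfies the loop law if and only if for every real z > 0 and every natural number r ≥ 0, the traces agree: tr(A(z)^r) = tr(A(1)^r). -/
open Matrix BigOperators

variable {V : Type*} [Fintype V] [DecidableEq V]

/-!
Expanding matrix powers along walks, `tr A(z)^r = ∑ z ^ w*(p)` over the closed walks `p` of
length `r`, so the loop law makes the trace independent of `z`. Conversely, comparing `z = e` and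
`z = 1/e` with `z = 1` gives `∑ (e ^ w*(p) + e ^ (-w*(p)) - 2) = 0`, and since `e^t + e^(-t) > 2`
for `t ≠ 0`, every closed walk has weight `0`.
-/

open Finset Real

lemma eq_zero_of_sum_rpow_eq_card {ι : Type*} {s : Finset ι} {c : ι → ℝ}
    (h : ∀ z : ℝ, 0 < z → ∑ i ∈ s, z ^ c i = #s) : ∀ i ∈ s, c i = 0 := by
  by_contra! ⟨j, hj, hcj⟩
  have hexp (t : ℝ) : ∑ i ∈ s, exp (t * c i) = #s := by
    simpa only [exp_mul] using h (exp t) (exp_pos t)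
  have hlt : ∑ i ∈ s, (2 : ℝ) < ∑ i ∈ s, (exp (c i) + exp (-c i)) := by
    refine sum_lt_sum (fun i _ => ?_) ⟨j, hj, ?_⟩
    · linarith [add_one_le_exp (c i), add_one_le_exp (-c i)]
    · linarith [add_one_lt_exp hcj, add_one_le_exp (-c j)]
  have hplus := hexp 1
  have hminus := hexp (-1)
  simp only [one_mul, neg_one_mul] at hplus hminus
  rw [sum_add_distrib, hplus, hminus, sum_const, nsmul_eq_mul] at hlt
  linarith

lemma Matrix.pow_apply_eq_sum_prod {R : Type*} [CommSemiring R] (A : Matrix V V R) (r : ℕ)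
    (u v : V) :
    (A ^ r) u v = ∑ p : Fin (r + 1) → V with p 0 = u ∧ p (Fin.last r) = v,
      ∏ i : Fin r, A (p i.castSucc) (p i.succ) := by
  induction r generalizing u with
  | zero =>
    rw [pow_zero, one_apply, sum_filter, ← (Equiv.funUnique (Fin 1) V).symm.sum_comp]
    simp only [Equiv.funUnique_symm_apply, uniqueElim_const, Fin.prod_univ_zero, ite_and,
      sum_ite_eq', mem_univ, if_true]
  | succ r ih =>
    conv_rhs => rw [sum_filter, ← (Fin.consEquiv fun _ => V).sum_comp, Fintype.sum_prod_type]
    simp only [pow_succ', mul_apply, ih, sum_filter, mul_sum, Fin.consEquiv_apply, Fin.cons_zero,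
      ← Fin.succ_last, Fin.cons_succ, Fin.prod_univ_succ, ite_and, Fin.castSucc_zero,
      ← Fin.succ_castSucc, mul_ite, mul_zero]
    rw [sum_comm]
    simp only [sum_ite_eq, sum_ite_irrel, sum_const_zero, sum_ite_eq', mem_univ, if_true]

lemma polyMat_pow_apply {E : V → V → Prop} [DecidableRel E] (w : V → V → ℝ) {z : ℝ}
    (hz : 0 < z) (r : ℕ) (u v : V) :
    (polyMat E w z ^ r) u v = ∑ p ∈ walks E r u v, z ^ walkWeight E w p := by
  have prod_eq_ite (p : Fin (r + 1) → V) :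
      ∏ i : Fin r, polyMat E w z (p i.castSucc) (p i.succ) =
        if ∀ i : Fin r, E (p i.castSucc) (p i.succ) ∨ E (p i.succ) (p i.castSucc)
        then z ^ walkWeight E w p else 0 := by
    split_ifs with hwalk
    · rw [walkWeight, rpow_sum_of_pos hz]
      exact prod_congr rfl fun i _ => if_pos (hwalk i)
    · obtain ⟨i, hi⟩ := not_forall.mp hwalk
      exact prod_eq_zero (mem_univ i) (if_neg hi)
  simp only [Matrix.pow_apply_eq_sum_prod, prod_eq_ite, ← sum_filter, filter_filter,
    walks, and_assoc]

lemma trace_polyMat_pow {E : V → V → Prop} [DecidableRel E] (w : V → V → ℝ) {z : ℝ}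
    (hz : 0 < z) (r : ℕ) :
    trace (polyMat E w z ^ r) =
      ∑ x ∈ univ.sigma fun u => walks E r u u, z ^ walkWeight E w x.2 := by
  simp only [trace, Matrix.diag, polyMat_pow_apply w hz, sum_sigma]

theorem loopLaw_iff_trace_general (E : V → V → Prop) [DecidableRel E]
    (w : V → V → ℝ) :
    LoopLaw E w ↔
      ∀ (z : ℝ), 0 < z → ∀ r : ℕ,
        Matrix.trace (polyMat E w z ^ r) =
          Matrix.trace (polyMat E w 1 ^ r) := by
  constructor
  · intro hloop z hz r
    rw [trace_polyMat_pow w hz, trace_polyMat_pow w one_pos]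
    refine sum_congr rfl fun ⟨u, p⟩ hp => ?_
    obtain ⟨hstart, hend, hwalk⟩ := by
      simpa only [mem_sigma, walks, mem_filter, mem_univ, true_and] using hp
    rw [hloop r p hwalk (hstart.trans hend.symm), rpow_zero, rpow_zero]
  · intro htrace r p hwalk hclosed
    refine eq_zero_of_sum_rpow_eq_card (s := univ.sigma fun u => walks E r u u)
      (c := fun x => walkWeight E w x.2) (fun z hz => ?_)
      ⟨p 0, p⟩ (by simp [walks, hwalk, hclosed])
    rw [← trace_polyMat_pow w hz, htrace z hz r, trace_polyMat_pow w one_pos]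
    simp

theorem loopLaw_iff_trace (E : V → V → Prop) [DecidableRel E]
    (w : V → V → ℝ)
    (hloopless : ∀ u, ¬ E u u)
    (honedir : ∀ u v, E u v → ¬ E v u) :
    LoopLaw E w ↔
      ∀ (z : ℝ), 0 < z → ∀ r : ℕ,
        Matrix.trace (polyMat E w z ^ r) =
          Matrix.trace (polyMat E w 1 ^ r) :=
  loopLaw_iff_trace_general E w
end

section
/- If G satisfies the loop law, then for every real z > 0 the matrix A(z) is diagonalizable over ℝ with all eigenvalues real; that is, there exists an invertible real matrix P such that P⁻¹ · A(z) · P is a diagonal matrix (whose diagonal entries are the eigenvalues of the real symmetric matrix A(1)). -/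
/-!
The loop law makes `w*` a potential difference: `w*(u,v) = φ v - φ u` on every arc, where `φ v`
is the weight of a walk to `v` from a fixed root of its component (closed walks have weight zero,
so the choice of walk is irrelevant). Hence `A(z) = D⁻¹ A(1) D` with `D = diag (z ^ φ)`, and
`A(z)` is similar to the real symmetric matrix `A(1)`, which the spectral theorem diagonalizes.
-/

open Matrix BigOperators

variable {V : Type*} [Fintype V] [DecidableEq V]

namespace SimpleGraph.Walk

variable {W α : Type*} [AddCommGroup α] {G : SimpleGraph W} (f : W → W → α)

def weight {u v : W} (p : G.Walk u v) : α :=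
  ∑ i ∈ Finset.range p.length, f (p.getVert i) (p.getVert (i + 1))

@[simp]
lemma weight_nil {u : W} : (nil : G.Walk u u).weight f = 0 := by
  simp [weight]

@[simp]
lemma weight_cons {u v x : W} (h : G.Adj u v) (p : G.Walk v x) :
    (cons h p).weight f = f u v + p.weight f := by
  rw [weight, weight, length_cons, Finset.sum_range_succ', add_comm]
  simp [getVert_cons_succ]

@[simp]
lemma weight_append {u v x : W} (p : G.Walk u v) (q : G.Walk v x) :
    (p.append q).weight f = p.weight f + q.weight f := by
  induction p with
  | nil => simp
  | cons h p ih => simp [ih, add_assoc]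

@[simp]
lemma weight_copy {u v u' v' : W} (p : G.Walk u v) (hu : u = u') (hv : v = v') :
    (p.copy hu hv).weight f = p.weight f := by
  subst hu hv
  rfl

end SimpleGraph.Walk

namespace SimpleGraph

variable {W α : Type*} [AddCommGroup α] {G : SimpleGraph W} {f : W → W → α}

lemma eq_weight_sub_weight_of_closed_weight_eq_zero
    (hf : ∀ a (c : G.Walk a a), c.weight f = 0) {a u v : W} (p : G.Walk a u) (q : G.Walk a v)
    (h : G.Adj u v) :
    f u v = q.weight f - p.weight f := by
  have hpq := hf a (p.append (.cons h q.reverse))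
  have hqq := hf a (q.append q.reverse)
  simp only [Walk.weight_append, Walk.weight_cons] at hpq hqq
  rw [eq_neg_of_add_eq_zero_right hqq] at hpq
  rw [← sub_eq_zero, ← hpq]
  abel

lemma exists_potential_of_closed_weight_eq_zero (hf : ∀ a (c : G.Walk a a), c.weight f = 0) :
    ∃ φ : W → α, ∀ u v, G.Adj u v → f u v = φ v - φ u := by
  have reach (v : W) : G.Reachable (G.connectedComponentMk v).out v :=
    ConnectedComponent.exact (Quot.out_eq _)
  refine ⟨fun v => (reach v).some.weight f, fun u v h => ?_⟩
  have hroot : (G.connectedComponentMk u).out = (G.connectedComponentMk v).out := by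
    rw [ConnectedComponent.connectedComponentMk_eq_of_adj h]
  simpa using eq_weight_sub_weight_of_closed_weight_eq_zero hf
    ((reach u).some.copy hroot rfl) (reach v).some h

end SimpleGraph

namespace Matrix

variable {n 𝕜 : Type*} [Fintype n] [DecidableEq n] [RCLike 𝕜]

lemma IsHermitian.exists_isUnit_det_inv_mul_conj_mul_eq_diagonal {S : Matrix n n 𝕜}
    (hS : S.IsHermitian) {Q Q' : Matrix n n 𝕜} (hQ : Q' * Q = 1) :
    ∃ P : Matrix n n 𝕜, IsUnit P.det ∧
      P⁻¹ * (Q' * S * Q) * P = diagonal (RCLike.ofReal ∘ hS.eigenvalues) := by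
  obtain ⟨U, hUU, hU⟩ : ∃ U : Matrix n n 𝕜, star U * U = 1 ∧ star U * S * U = _ :=
    ⟨_, Unitary.coe_star_mul_self _, (Unitary.conjStarAlgAut_star_apply _ _).symm.trans
      hS.conjStarAlgAut_star_eigenvectorUnitary⟩
  have hQ' : Q * Q' = 1 := mul_eq_one_comm.mp hQ
  have hinv : star U * Q * (Q' * U) = 1 := by
    rw [mul_assoc, ← mul_assoc Q, hQ', one_mul, hUU]
  refine ⟨Q' * U, isUnit_det_of_left_inverse hinv, ?_⟩
  calc (Q' * U)⁻¹ * (Q' * S * Q) * (Q' * U)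
      = star U * (Q * Q') * S * (Q * Q') * U := by
        simp only [inv_eq_left_inv hinv, mul_assoc]
    _ = _ := by rw [hQ', mul_one, mul_one, hU]

end Matrix

section LoopLaw

variable {W : Type*} {E : W → W → Prop} [DecidableRel E] {w : W → W → ℝ}

lemma LoopLaw.weight_eq_zero (hLL : LoopLaw E w) {a : W}
    (c : (SimpleGraph.fromRel E).Walk a a) : c.weight (wstar E w) = 0 := by
  have hadj (i : Fin c.length) : E (c.getVert i) (c.getVert (i + 1)) ∨
      E (c.getVert (i + 1)) (c.getVert i) :=
    ((SimpleGraph.fromRel_adj _ _ _).mp (c.adj_getVert_succ i.isLt)).2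
  simpa [walkWeight, SimpleGraph.Walk.weight, Fin.sum_univ_eq_sum_range
      (fun i => wstar E w (c.getVert i) (c.getVert (i + 1)))]
    using hLL c.length (fun i => c.getVert i) (by simpa using hadj) (by simp)

lemma LoopLaw.wstar_self_eq_zero (hLL : LoopLaw E w) {u : W} (h : E u u) :
    wstar E w u u = 0 := by
  simpa [walkWeight] using hLL 1 (fun _ => u) (fun _ => Or.inl h) rfl

lemma LoopLaw.exists_potential (hLL : LoopLaw E w) :
    ∃ φ : W → ℝ, ∀ u v, E u v ∨ E v u → wstar E w u v = φ v - φ u := by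
  obtain ⟨φ, hφ⟩ :=
    SimpleGraph.exists_potential_of_closed_weight_eq_zero fun _ => hLL.weight_eq_zero
  refine ⟨φ, fun u v h => ?_⟩
  by_cases huv : u = v
  · subst huv
    rw [sub_self, hLL.wstar_self_eq_zero (h.elim id id)]
  · exact hφ u v ((SimpleGraph.fromRel_adj _ _ _).mpr ⟨huv, h⟩)

end LoopLaw

lemma polyMat_one_isHermitian {W : Type*} (E : W → W → Prop) [DecidableRel E]
    (w : W → W → ℝ) : (polyMat E w 1).IsHermitian := by
  ext u v
  simp [polyMat, or_comm]

lemma polyMat_eq_diagonal_mul_polyMat_one_mul_diagonal {E : V → V → Prop} [DecidableRel E]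
    {w : V → V → ℝ} {z : ℝ} (hz : 0 < z) {φ : V → ℝ}
    (hφ : ∀ u v, E u v ∨ E v u → wstar E w u v = φ v - φ u) :
    polyMat E w z =
      diagonal (fun u => z ^ (-φ u)) * polyMat E w 1 * diagonal (fun v => z ^ φ v) := by
  ext u v
  simp only [mul_diagonal, diagonal_mul, polyMat, Real.one_rpow]
  split_ifs with h
  · rw [hφ u v h, Real.rpow_sub hz, Real.rpow_neg hz.le]
    ring
  · simp

theorem loopLaw_diagonalizable_general (E : V → V → Prop) [DecidableRel E]
    (w : V → V → ℝ)
    (hLL : LoopLaw E w) (z : ℝ) (hz : 0 < z) :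
    ∃ (P : Matrix V V ℝ), IsUnit P.det ∧
      ∃ (d : V → ℝ), P⁻¹ * polyMat E w z * P = Matrix.diagonal d ∧
        (Matrix.diagonal d).charpoly = (polyMat E w 1).charpoly := by
  obtain ⟨φ, hφ⟩ := hLL.exists_potential
  have hinv : (diagonal fun u => z ^ (-φ u)) * diagonal (fun u => z ^ φ u) = 1 := by
    simp [diagonal_mul_diagonal, Real.rpow_neg hz.le, (Real.rpow_pos_of_pos hz _).ne']
  have hA := polyMat_one_isHermitian E w
  obtain ⟨P, hP, hdiag⟩ := hA.exists_isUnit_det_inv_mul_conj_mul_eq_diagonal hinv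
  refine ⟨P, hP, _, ?_, by rw [charpoly_diagonal, hA.charpoly_eq]⟩
  rwa [polyMat_eq_diagonal_mul_polyMat_one_mul_diagonal hz hφ]

theorem loopLaw_diagonalizable (E : V → V → Prop) [DecidableRel E]
    (w : V → V → ℝ)
    (hloopless : ∀ u, ¬ E u u)
    (honedir : ∀ u v, E u v → ¬ E v u)
    (hLL : LoopLaw E w) (z : ℝ) (hz : 0 < z) :
    ∃ (P : Matrix V V ℝ), IsUnit P.det ∧
      ∃ (d : V → ℝ), P⁻¹ * polyMat E w z * P = Matrix.diagonal d ∧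
        (Matrix.diagonal d).charpoly = (polyMat E w 1).charpoly :=
  loopLaw_diagonalizable_general E w hLL z hz
end
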